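/- Given a finite MDP and a policy π : S → Δ(A), define R^π_s = Σ_a π(a|s)R(s,a) and P^π_s(s') = Σ_a π(a|s)P(s,a)(s'). The operator F^π(d)(s,t) = |R^π_s − R^π_t| + γ·W₁(d)(P^π_s, P^π_t) is a γ-contraction in the supremum norm on bounded pseudometrics and hence has a unique fixed point d^π∼. -/

import Mathlib

open Finset

def IsProb {S : Type*} [Fintype S] (μ : S → ℝ) : Prop :=
  (∀ s, 0 ≤ μ s) ∧ ∑ s, μ s = 1

def IsCoupling {S : Type*} [Fintype S] (l : S → S → ℝ) (μ ν : S → ℝ) : Prop :=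
  (∀ s t, 0 ≤ l s t) ∧ (∀ s, ∑ t, l s t = μ s) ∧ (∀ t, ∑ s, l s t = ν t)

noncomputable def W1 {S : Type*} [Fintype S] (d : S → S → ℝ) (μ ν : S → ℝ) : ℝ :=
  sInf {c | ∃ l, IsCoupling l μ ν ∧ c = ∑ s, ∑ t, l s t * d s t}

def IsPseudometric {S : Type*} (d : S → S → ℝ) : Prop :=
  (∀ s t, 0 ≤ d s t) ∧ (∀ s, d s s = 0) ∧ (∀ s t, d s t = d t s) ∧
    (∀ s t u, d s u ≤ d s t + d t u)

noncomputable def bisimF {S A : Type*} [Fintype S] [Fintype A] [Nonempty A]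
    (R : S → A → ℝ) (P : S → A → S → ℝ) (γ : ℝ) (d : S → S → ℝ) : S → S → ℝ :=
  fun s t => univ.sup' univ_nonempty
    (fun a => |R s a - R t a| + γ * W1 d (P s a) (P t a))

noncomputable def supDist {S : Type*} [Fintype S] [Nonempty S]
    (d d' : S → S → ℝ) : ℝ :=
  univ.sup' univ_nonempty (fun p : S × S => |d p.1 p.2 - d' p.1 p.2|)

def Rpi {S A : Type*} [Fintype A] (R : S → A → ℝ) (pol : S → A → ℝ) (s : S) : ℝ :=
  ∑ a, pol s a * R s a

def Ppi {S A : Type*} [Fintype A] (P : S → A → S → ℝ) (pol : S → A → ℝ)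
    (s s' : S) : ℝ :=
  ∑ a, pol s a * P s a s'

noncomputable def piF {S A : Type*} [Fintype S] [Fintype A]
    (R : S → A → ℝ) (P : S → A → S → ℝ) (pol : S → A → ℝ) (γ : ℝ)
    (d : S → S → ℝ) : S → S → ℝ :=
  fun s t => |Rpi R pol s - Rpi R pol t| + γ * W1 d (Ppi P pol s) (Ppi P pol t)

/-!
Changing the ground cost by at most `C` changes every transport cost, hence `W₁`, by at most
`C`, because couplings have total mass one. So `F^π` is `γ`-Lipschitz for the sup distance,
which is the distance of the product space `S → S → ℝ`, and Banach's theorem gives a unique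
fixed point. It is a pseudometric because `F^π` preserves pseudometrics (`W₁` of a pseudometric
is one on distributions, the triangle inequality coming from gluing two couplings along the
middle marginal) and pseudometrics form a closed set.
-/

section Transport

variable {S : Type*} [Fintype S] {μ ν ρ : S → ℝ} {d d' l l₁ l₂ : S → S → ℝ}

def transportCost (d l : S → S → ℝ) : ℝ :=
  ∑ s, ∑ t, l s t * d s t

theorem IsProb.isCoupling_mul (hμ : IsProb μ) (hν : IsProb ν) :
    IsCoupling (fun s t => μ s * ν t) μ ν :=
  ⟨fun s t => mul_nonneg (hμ.1 s) (hν.1 t),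
    fun s => by rw [← mul_sum, hν.2, mul_one], fun t => by rw [← sum_mul, hμ.2, one_mul]⟩

theorem IsCoupling.swap (hl : IsCoupling l μ ν) : IsCoupling (Function.swap l) ν μ :=
  ⟨fun t s => hl.1 s t, hl.2.2, hl.2.1⟩

theorem IsCoupling.le_left (hl : IsCoupling l μ ν) (s t : S) : l s t ≤ μ s :=
  hl.2.1 s ▸ single_le_sum (fun u _ => hl.1 s u) (mem_univ t)

theorem IsCoupling.le_right (hl : IsCoupling l μ ν) (s t : S) : l s t ≤ ν t :=
  hl.swap.le_left t s

theorem IsCoupling.sum_sum_eq_one (hl : IsCoupling l μ ν) (hμ : IsProb μ) :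
    ∑ s, ∑ t, l s t = 1 := by
  simp only [hl.2.1, hμ.2]

theorem neg_sum_sum_mul_abs_le_transportCost (hl : IsCoupling l μ ν) :
    -∑ s, ∑ t, μ s * |d s t| ≤ transportCost d l := by
  simp only [transportCost, ← sum_neg_distrib]
  gcongr with s _ t _
  calc -(μ s * |d s t|) ≤ -(l s t * |d s t|) := by
        gcongr
        exact hl.le_left s t
    _ ≤ l s t * d s t := by
        rw [← mul_neg]
        exact mul_le_mul_of_nonneg_left (neg_abs_le _) (hl.1 s t)

theorem transportCost_le_add (hl : IsCoupling l μ ν) (hμ : IsProb μ) {C : ℝ}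
    (h : ∀ s t, d s t ≤ d' s t + C) : transportCost d l ≤ transportCost d' l + C :=
  calc transportCost d l ≤ ∑ s, ∑ t, l s t * (d' s t + C) := by
        unfold transportCost
        gcongr with s _ t _
        · exact hl.1 s t
        · exact h s t
    _ = transportCost d' l + (∑ s, ∑ t, l s t) * C := by
        simp only [transportCost, mul_add, sum_add_distrib, sum_mul]
    _ = transportCost d' l + C := by rw [hl.sum_sum_eq_one hμ, one_mul]

/-- Where `ν t = 0`, the junk value `x / 0 = 0` is the right one, since then `l₁ s t = 0`. -/
noncomputable def gluing (l₁ l₂ : S → S → ℝ) (ν : S → ℝ) (s t u : S) : ℝ :=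
  l₁ s t * l₂ t u / ν t

theorem sum_gluing_right (h₁ : IsCoupling l₁ μ ν) (h₂ : IsCoupling l₂ ν ρ) (s t : S) :
    ∑ u, gluing l₁ l₂ ν s t u = l₁ s t := by
  simp only [gluing, ← sum_div, ← mul_sum, h₂.2.1]
  exact mul_div_cancel_of_imp fun h => le_antisymm (h ▸ h₁.le_right s t) (h₁.1 s t)

theorem sum_gluing_left (h₁ : IsCoupling l₁ μ ν) (h₂ : IsCoupling l₂ ν ρ) (t u : S) :
    ∑ s, gluing l₁ l₂ ν s t u = l₂ t u := by
  simp only [gluing, ← sum_div, ← sum_mul, h₁.2.2]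
  exact mul_div_cancel_left_of_imp fun h => le_antisymm (h ▸ h₂.le_left t u) (h₂.1 t u)

theorem gluing_nonneg (h₁ : IsCoupling l₁ μ ν) (h₂ : IsCoupling l₂ ν ρ) (s t u : S) :
    0 ≤ gluing l₁ l₂ ν s t u :=
  div_nonneg (mul_nonneg (h₁.1 s t) (h₂.1 t u)) ((h₂.1 t u).trans (h₂.le_left t u))

theorem IsCoupling.comp (h₁ : IsCoupling l₁ μ ν) (h₂ : IsCoupling l₂ ν ρ) :
    IsCoupling (fun s u => ∑ t, gluing l₁ l₂ ν s t u) μ ρ := by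
  refine ⟨fun s u => sum_nonneg fun t _ => gluing_nonneg h₁ h₂ s t u, fun s => ?_,
    fun u => ?_⟩
  · rw [sum_comm, ← h₁.2.1 s]
    exact sum_congr rfl fun t _ => sum_gluing_right h₁ h₂ s t
  · rw [sum_comm, ← h₂.2.2 u]
    exact sum_congr rfl fun t _ => sum_gluing_left h₁ h₂ t u

theorem transportCost_comp_le (htri : ∀ s t u, d s u ≤ d s t + d t u)
    (h₁ : IsCoupling l₁ μ ν) (h₂ : IsCoupling l₂ ν ρ) :
    transportCost d (fun s u => ∑ t, gluing l₁ l₂ ν s t u) ≤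
      transportCost d l₁ + transportCost d l₂ := by
  calc transportCost d (fun s u => ∑ t, gluing l₁ l₂ ν s t u)
      = ∑ s, ∑ t, ∑ u, gluing l₁ l₂ ν s t u * d s u := by
        simp only [transportCost, sum_mul]
        exact sum_congr rfl fun s _ => sum_comm
    _ ≤ ∑ s, ∑ t, ∑ u, gluing l₁ l₂ ν s t u * (d s t + d t u) := by
        gcongr with s _ t _ u _
        · exact gluing_nonneg h₁ h₂ s t u
        · exact htri s t u
    _ = transportCost d l₁ + transportCost d l₂ := by
        simp only [mul_add, sum_add_distrib, transportCost]
        congr 1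
        · simp only [← sum_mul, sum_gluing_right h₁ h₂]
        · rw [sum_comm]
          refine sum_congr rfl fun t _ => ?_
          simp only [sum_comm (γ := S) (f := fun s u => gluing l₁ l₂ ν s t u * d t u),
            ← sum_mul, sum_gluing_left h₁ h₂]

end Transport

section Wasserstein

variable {S : Type*} [Fintype S] {μ ν ρ : S → ℝ} {d d' l : S → S → ℝ}

theorem bddBelow_transportCost :
    BddBelow {c | ∃ l, IsCoupling l μ ν ∧ c = transportCost d l} := by
  refine ⟨-∑ s, ∑ t, μ s * |d s t|, ?_⟩
  rintro c ⟨l, hl, rfl⟩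
  exact neg_sum_sum_mul_abs_le_transportCost hl

theorem W1_le_transportCost (hl : IsCoupling l μ ν) : W1 d μ ν ≤ transportCost d l :=
  csInf_le bddBelow_transportCost ⟨l, hl, rfl⟩

theorem le_W1 (hμ : IsProb μ) (hν : IsProb ν) {c : ℝ}
    (h : ∀ l, IsCoupling l μ ν → c ≤ transportCost d l) : c ≤ W1 d μ ν :=
  le_csInf ⟨_, _, hμ.isCoupling_mul hν, rfl⟩ fun _ ⟨l, hl, hc⟩ => hc ▸ h l hl

theorem W1_nonneg (hd : ∀ s t, 0 ≤ d s t) (hμ : IsProb μ) (hν : IsProb ν) :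
    0 ≤ W1 d μ ν :=
  le_W1 hμ hν fun _ hl => sum_nonneg fun s _ => sum_nonneg fun t _ =>
    mul_nonneg (hl.1 s t) (hd s t)

theorem W1_self_le (hd : ∀ s, d s s = 0) (hμ : IsProb μ) : W1 d μ μ ≤ 0 := by
  classical
  have hdiag : IsCoupling (fun s t => if s = t then μ s else 0) μ μ :=
    ⟨fun s t => by dsimp only; split_ifs <;> simp [hμ.1 s], fun s => by simp, fun t => by simp⟩
  refine (W1_le_transportCost hdiag).trans_eq <|
    sum_eq_zero fun s _ => sum_eq_zero fun t _ => ?_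
  dsimp only
  split_ifs with hst
  · rw [hst, hd, mul_zero]
  · rw [zero_mul]

theorem W1_comm (hd : ∀ s t, d s t = d t s) (hμ : IsProb μ) (hν : IsProb ν) :
    W1 d μ ν = W1 d ν μ := by
  have key : ∀ {μ ν : S → ℝ}, IsProb μ → IsProb ν → W1 d ν μ ≤ W1 d μ ν :=
    fun hμ hν => le_W1 hμ hν fun l hl => (W1_le_transportCost hl.swap).trans_eq <| by
      rw [transportCost, sum_comm]
      exact sum_congr rfl fun s _ => sum_congr rfl fun t _ => by rw [Function.swap, hd]
  exact le_antisymm (key hν hμ) (key hμ hν)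

theorem W1_triangle (htri : ∀ s t u, d s u ≤ d s t + d t u)
    (hμ : IsProb μ) (hν : IsProb ν) (hρ : IsProb ρ) :
    W1 d μ ρ ≤ W1 d μ ν + W1 d ν ρ := by
  rw [← sub_le_iff_le_add']
  refine le_W1 hν hρ fun l₂ h₂ => ?_
  rw [sub_le_iff_le_add, ← sub_le_iff_le_add']
  refine le_W1 hμ hν fun l₁ h₁ => ?_
  rw [sub_le_iff_le_add]
  exact (W1_le_transportCost (h₁.comp h₂)).trans (transportCost_comp_le htri h₁ h₂)

theorem W1_le_W1_add (hμ : IsProb μ) (hν : IsProb ν) {C : ℝ}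
    (h : ∀ s t, d s t ≤ d' s t + C) : W1 d μ ν ≤ W1 d' μ ν + C := by
  rw [← sub_le_iff_le_add]
  refine le_W1 hμ hν fun l hl => ?_
  rw [sub_le_iff_le_add]
  exact (W1_le_transportCost hl).trans (transportCost_le_add hl hμ h)

theorem abs_W1_sub_W1_le (hμ : IsProb μ) (hν : IsProb ν) {C : ℝ}
    (h : ∀ s t, |d s t - d' s t| ≤ C) : |W1 d μ ν - W1 d' μ ν| ≤ C := by
  rw [abs_sub_le_iff, sub_le_iff_le_add', sub_le_iff_le_add']
  constructor
  · exact W1_le_W1_add hμ hν fun s t => by linarith [(abs_sub_le_iff.1 (h s t)).1]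
  · exact W1_le_W1_add hμ hν fun s t => by linarith [(abs_sub_le_iff.1 (h s t)).2]

end Wasserstein

namespace IsPseudometric

variable {S T : Type*} {d e : S → S → ℝ}

theorem abs_sub (f : S → ℝ) : IsPseudometric fun s t => |f s - f t| :=
  ⟨fun _ _ => abs_nonneg _, fun _ => by simp, fun _ _ => abs_sub_comm _ _,
    fun _ _ _ => abs_sub_le _ _ _⟩

theorem add (hd : IsPseudometric d) (he : IsPseudometric e) : IsPseudometric (d + e) :=
  ⟨fun s t => add_nonneg (hd.1 s t) (he.1 s t), fun s => by simp [hd.2.1 s, he.2.1 s],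
    fun s t => by simp [hd.2.2.1 s t, he.2.2.1 s t],
    fun s t u => by
      simpa [add_add_add_comm] using add_le_add (hd.2.2.2 s t u) (he.2.2.2 s t u)⟩

theorem smul (hd : IsPseudometric d) {c : ℝ} (hc : 0 ≤ c) : IsPseudometric (c • d) :=
  ⟨fun s t => mul_nonneg hc (hd.1 s t), fun s => by simp [hd.2.1 s],
    fun s t => by simp [hd.2.2.1 s t],
    fun s t u => by simpa [mul_add] using mul_le_mul_of_nonneg_left (hd.2.2.2 s t u) hc⟩

theorem W1_comp [Fintype S] (hd : IsPseudometric d) {m : T → S → ℝ} (hm : ∀ x, IsProb (m x)) :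
    IsPseudometric fun x y => W1 d (m x) (m y) :=
  ⟨fun x y => W1_nonneg hd.1 (hm x) (hm y),
    fun x => le_antisymm (W1_self_le hd.2.1 (hm x)) (W1_nonneg hd.1 (hm x) (hm x)),
    fun x y => W1_comm hd.2.2.1 (hm x) (hm y),
    fun x y z => W1_triangle hd.2.2.2 (hm x) (hm y) (hm z)⟩

end IsPseudometric

theorem isClosed_setOf_isPseudometric {S : Type*} [Fintype S] :
    IsClosed {d : S → S → ℝ | IsPseudometric d} := by
  simp only [IsPseudometric, Set.ofPred_and, Set.ofPred_forall]
  refine .inter ?_ (.inter ?_ (.inter ?_ ?_)) <;>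
    refine isClosed_iInter fun s => ?_
  · exact isClosed_iInter fun t => isClosed_le continuous_const (by fun_prop)
  · exact isClosed_eq (by fun_prop) continuous_const
  · exact isClosed_iInter fun t => isClosed_eq (by fun_prop) (by fun_prop)
  · exact isClosed_iInter fun t => isClosed_iInter fun u =>
      isClosed_le (by fun_prop) (by fun_prop)

theorem ContractingWith.fixedPoint_mem_of_isClosed {α : Type*} [MetricSpace α] [Nonempty α]
    [CompleteSpace α] {K : NNReal} {f : α → α} (hf : ContractingWith K f) {s : Set α}
    (hs : IsClosed s) (hsf : Set.MapsTo f s s) {x : α} (hx : x ∈ s) :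
    ContractingWith.fixedPoint f hf ∈ s :=
  hs.mem_of_tendsto (hf.tendsto_iterate_fixedPoint x) (.of_forall fun n => hsf.iterate n hx)

theorem abs_sub_le_dist {S T : Type*} [Fintype S] [Fintype T] (d d' : S → T → ℝ) (s : S)
    (t : T) : |d s t - d' s t| ≤ dist d d' :=
  (Real.dist_eq _ _).symm.trans_le
    ((dist_le_pi_dist (d s) (d' s) t).trans (dist_le_pi_dist d d' s))

theorem supDist_eq_dist {S : Type*} [Fintype S] [Nonempty S] (d d' : S → S → ℝ) :
    supDist d d' = dist d d' := by
  have habs_le : ∀ s t, |d s t - d' s t| ≤ supDist d d' := fun s t =>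
    le_sup' (fun p : S × S => |d p.1 p.2 - d' p.1 p.2|) (mem_univ (s, t))
  obtain ⟨s₀⟩ := ‹Nonempty S›
  have hnonneg : 0 ≤ supDist d d' := (abs_nonneg _).trans (habs_le s₀ s₀)
  refine le_antisymm (sup'_le _ _ fun p _ => abs_sub_le_dist d d' p.1 p.2) ?_
  exact (dist_pi_le_iff hnonneg).2 fun s => (dist_pi_le_iff hnonneg).2 fun t =>
      (Real.dist_eq _ _).trans_le (habs_le s t)

section Policy

variable {S A : Type*} [Fintype S] [Fintype A] {R : S → A → ℝ} {P : S → A → S → ℝ}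
  {pol : S → A → ℝ} {γ : ℝ}

theorem isProb_Ppi (hP : ∀ s a, IsProb (P s a)) (hpol : ∀ s, IsProb (pol s)) (s : S) :
    IsProb (Ppi P pol s) := by
  refine ⟨fun s' => sum_nonneg fun a _ => mul_nonneg ((hpol s).1 a) ((hP s a).1 s'), ?_⟩
  simp only [Ppi]
  rw [sum_comm]
  simp only [← mul_sum, (hP s _).2, mul_one, (hpol s).2]

theorem isPseudometric_piF (hP : ∀ s a, IsProb (P s a)) (hpol : ∀ s, IsProb (pol s))
    (hγ : 0 ≤ γ) {d : S → S → ℝ} (hd : IsPseudometric d) :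
    IsPseudometric (piF R P pol γ d) :=
  (IsPseudometric.abs_sub (Rpi R pol)).add ((hd.W1_comp (isProb_Ppi hP hpol)).smul hγ)

theorem lipschitzWith_piF (hP : ∀ s a, IsProb (P s a)) (hpol : ∀ s, IsProb (pol s))
    (hγ : 0 ≤ γ) : LipschitzWith ⟨γ, hγ⟩ (piF R P pol γ) := by
  refine LipschitzWith.of_dist_le_mul fun d d' => ?_
  have hnonneg : 0 ≤ γ * dist d d' := mul_nonneg hγ dist_nonneg
  refine (dist_pi_le_iff hnonneg).2 fun s => (dist_pi_le_iff hnonneg).2 fun t => ?_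
  have hW1 := abs_W1_sub_W1_le (isProb_Ppi hP hpol s) (isProb_Ppi hP hpol t)
    (abs_sub_le_dist d d')
  calc dist (piF R P pol γ d s t) (piF R P pol γ d' s t)
      = γ * |W1 d (Ppi P pol s) (Ppi P pol t) - W1 d' (Ppi P pol s) (Ppi P pol t)| := by
        rw [Real.dist_eq, piF, piF, add_sub_add_left_eq_sub, ← mul_sub, abs_mul,
          abs_of_nonneg hγ]
    _ ≤ γ * dist d d' := mul_le_mul_of_nonneg_left hW1 hγ

end Policy

theorem piF_contraction_and_fixed_point_general {S A : Type*} [Fintype S] [Fintype A] [Nonempty S]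
    (R : S → A → ℝ) (P : S → A → S → ℝ) (hP : ∀ s a, IsProb (P s a))
    (pol : S → A → ℝ) (hpol : ∀ s, IsProb (pol s))
    (γ : ℝ) (hγ0 : 0 ≤ γ) (hγ1 : γ < 1) :
    (∀ d d' : S → S → ℝ, IsPseudometric d → IsPseudometric d' →
      supDist (piF R P pol γ d) (piF R P pol γ d') ≤ γ * supDist d d') ∧
    (∃! d : S → S → ℝ, IsPseudometric d ∧ piF R P pol γ d = d) := by
  have hlip := lipschitzWith_piF (R := R) hP hpol hγ0
  have hcontr : ContractingWith ⟨γ, hγ0⟩ (piF R P pol γ) := ⟨hγ1, hlip⟩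
  refine ⟨fun d d' _ _ => ?_, ?_⟩
  · rw [supDist_eq_dist, supDist_eq_dist]
    exact hlip.dist_le_mul d d'
  · have hmem := hcontr.fixedPoint_mem_of_isClosed isClosed_setOf_isPseudometric
      (fun _ hd => isPseudometric_piF hP hpol hγ0 hd)
      (IsPseudometric.abs_sub fun _ : S => 0)
    exact ⟨_, ⟨hmem, hcontr.fixedPoint_isFixedPt⟩, fun d hd => hcontr.fixedPoint_unique hd.2⟩

theorem piF_contraction_and_fixed_point {S A : Type*} [Fintype S] [Fintype A] [Nonempty S] [Nonempty A]
    (R : S → A → ℝ) (P : S → A → S → ℝ) (hP : ∀ s a, IsProb (P s a))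
    (pol : S → A → ℝ) (hpol : ∀ s, IsProb (pol s))
    (γ : ℝ) (hγ0 : 0 ≤ γ) (hγ1 : γ < 1) :
    (∀ d d' : S → S → ℝ, IsPseudometric d → IsPseudometric d' →
      supDist (piF R P pol γ d) (piF R P pol γ d') ≤ γ * supDist d d') ∧
    (∃! d : S → S → ℝ, IsPseudometric d ∧ piF R P pol γ d = d) :=
  piF_contraction_and_fixed_point_general R P hP pol hpol γ hγ0 hγ1
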